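/- Let V₀ be a complex Hermitian space of signature (1, n-1), let u₂ be a unit vector (⟨u₂,u₂⟩ = 1), and suppose T ∈ V₀ is nonzero with ⟨T,T⟩ = 0. Then the infimum over h ∈ U(V₀) of |⟨u₂, T·h⟩| is 0, while ⟨u₂, T·h⟩ ≠ 0 for all h ∈ U(V₀). -/

import Mathlib

/-- The Hermitian form of signature `(1, n-1)` on `V₀ = ℂ × W` (where `W` carries a
positive definite inner product giving the negative definite part). -/
noncomputable def herm {W : Type*} [NormedAddCommGroup W] [InnerProductSpace ℂ W]
    (v w : ℂ × W) : ℂ :=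
  v.1 * (starRingEnd ℂ) w.1 - (inner ℂ w.2 v.2 : ℂ)

/-! An isometry maps a nonzero isotropic vector to a nonzero isotropic vector, and an isotropic
vector with vanishing first coordinate is zero because the form is negative definite on `0 × W`.

For the infimum, pick a unit vector `u ∈ W` with `⟪u, T.2⟫ = -T.1`, which exists because
isotropy means `‖T.1‖ = ‖T.2‖`. Then `T` lies on a null line of the hyperbolic plane spanned by
`(1, 0)` and `(0, u)`, and the hyperbolic rotation of that plane by `r` scales it by `exp (-r)`. -/

open ComplexConjugate

section

variable {W : Type*} [NormedAddCommGroup W] [InnerProductSpace ℂ W]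

lemma herm_self (v : ℂ × W) : herm v v = ((‖v.1‖ ^ 2 - ‖v.2‖ ^ 2 : ℝ) : ℂ) := by
  rw [herm, Complex.mul_conj', inner_self_eq_norm_sq_to_K]
  push_cast; rfl

lemma herm_self_eq_zero_iff (v : ℂ × W) : herm v v = 0 ↔ ‖v.1‖ = ‖v.2‖ := by
  rw [herm_self, Complex.ofReal_eq_zero, sub_eq_zero]
  exact pow_left_inj₀ (norm_nonneg _) (norm_nonneg _) two_ne_zero

lemma herm_one_zero_left (v : ℂ × W) : herm ((1 : ℂ), (0 : W)) v = conj v.1 := by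
  simp [herm]

lemma fst_ne_zero_of_herm_self_eq_zero {v : ℂ × W} (hv : v ≠ 0) (hiso : herm v v = 0) :
    v.1 ≠ 0 := by
  intro h1
  rw [herm_self_eq_zero_iff, h1, norm_zero, eq_comm, norm_eq_zero] at hiso
  exact hv (Prod.ext h1 hiso)

lemma exists_norm_eq_one_inner_eq {w : W} (hw : w ≠ 0) {c : ℂ} (hc : ‖c‖ = ‖w‖) :
    ∃ u : W, ‖u‖ = 1 ∧ inner ℂ u w = c := by
  have hw' : ‖w‖ ≠ 0 := norm_ne_zero_iff.mpr hw
  refine ⟨(conj c / (‖w‖ : ℂ) ^ 2) • w, ?_, ?_⟩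
  · rw [norm_smul, norm_div, Complex.norm_conj, norm_pow, Complex.norm_real, Real.norm_eq_abs,
      abs_norm, hc]
    field_simp
  · rw [inner_smul_left, inner_self_eq_norm_sq_to_K, map_div₀, Complex.conj_conj, map_pow,
      Complex.conj_ofReal]
    exact div_mul_cancel₀ c (pow_ne_zero 2 (Complex.ofReal_ne_zero.mpr hw'))

/-- The hyperbolic rotation by angle `r` of the plane spanned by `(1, 0)` and `(0, u)`,
extended by the identity on the orthogonal complement. -/
noncomputable def boost (u : W) (r : ℝ) : (ℂ × W) →ₗ[ℂ] (ℂ × W) where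
  toFun p := (Real.cosh r * p.1 + Real.sinh r * inner ℂ u p.2,
    p.2 + ((Real.cosh r - 1) * inner ℂ u p.2 + Real.sinh r * p.1) • u)
  map_add' x y := by
    refine Prod.ext ?_ ?_
    · simp only [Prod.fst_add, Prod.snd_add, inner_add_right]; ring
    · simp only [Prod.fst_add, Prod.snd_add, inner_add_right]; module
  map_smul' c x := by
    refine Prod.ext ?_ ?_
    · simp only [Prod.smul_fst, Prod.smul_snd, inner_smul_right, smul_eq_mul,
        RingHom.id_apply]; ring
    · simp only [Prod.smul_fst, Prod.smul_snd, inner_smul_right, smul_eq_mul,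
        RingHom.id_apply]; module

lemma boost_apply (u : W) (r : ℝ) (p : ℂ × W) :
    boost u r p = (Real.cosh r * p.1 + Real.sinh r * inner ℂ u p.2,
      p.2 + ((Real.cosh r - 1) * inner ℂ u p.2 + Real.sinh r * p.1) • u) := rfl

lemma boost_zero (u : W) : boost u 0 = LinearMap.id := by
  ext p <;> simp [boost_apply]

variable {u : W}

lemma boost_comp_boost (hu : ‖u‖ = 1) (r s : ℝ) :
    boost u r ∘ₗ boost u s = boost u (r + s) := by
  have huu : inner ℂ u u = (1 : ℂ) := inner_self_eq_one_of_norm_eq_one hu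
  refine LinearMap.ext fun p => Prod.ext ?_ ?_ <;>
    simp only [LinearMap.comp_apply, boost_apply, inner_add_right, inner_smul_right, huu,
      mul_one, Real.cosh_add, Real.sinh_add] <;> push_cast
  · ring
  · match_scalars <;> ring

lemma herm_boost (hu : ‖u‖ = 1) (r : ℝ) (v w : ℂ × W) :
    herm (boost u r v) (boost u r w) = herm v w := by
  have huu : inner ℂ u u = (1 : ℂ) := inner_self_eq_one_of_norm_eq_one hu
  have hcs : (Real.cosh r : ℂ) ^ 2 = Real.sinh r ^ 2 + 1 := by
    exact_mod_cast Real.cosh_sq r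
  simp only [herm, boost_apply, inner_add_right, inner_add_left, inner_smul_right,
    inner_smul_left, huu, map_add, map_mul, map_sub, map_one, Complex.conj_ofReal,
    inner_conj_symm]
  linear_combination (v.1 * conj w.1 - inner ℂ u v.2 * inner ℂ w.2 u) * hcs

noncomputable def boostEquiv (hu : ‖u‖ = 1) (r : ℝ) : (ℂ × W) ≃ₗ[ℂ] (ℂ × W) :=
  LinearEquiv.ofLinearMap (boost u r) (boost u (-r))
    (by rw [boost_comp_boost hu, add_neg_cancel, boost_zero])
    (by rw [boost_comp_boost hu, neg_add_cancel, boost_zero])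

lemma boostEquiv_apply (hu : ‖u‖ = 1) (r : ℝ) (p : ℂ × W) :
    boostEquiv hu r p = boost u r p := rfl

lemma boost_fst_of_inner_eq_neg (r : ℝ) {p : ℂ × W} (hp : inner ℂ u p.2 = -p.1) :
    (boost u r p).1 = Real.exp (-r) * p.1 := by
  rw [boost_apply, hp, ← Real.cosh_sub_sinh]
  push_cast; ring

end

theorem isotropic_pairing_inf_zero_general (W : Type*) [NormedAddCommGroup W]
    [InnerProductSpace ℂ W]
    (T : ℂ × W) (hT0 : T ≠ 0) (hTiso : herm T T = 0) :
    (∀ g : (ℂ × W) ≃ₗ[ℂ] (ℂ × W), (∀ v w, herm (g v) (g w) = herm v w) →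
      herm ((1 : ℂ), (0 : W)) (g T) ≠ 0) ∧
    (∀ ε : ℝ, 0 < ε → ∃ g : (ℂ × W) ≃ₗ[ℂ] (ℂ × W),
      (∀ v w, herm (g v) (g w) = herm v w) ∧
        ‖herm ((1 : ℂ), (0 : W)) (g T)‖ < ε) := by
  refine ⟨fun g hg => ?_, fun ε hε => ?_⟩
  · rw [herm_one_zero_left, map_ne_zero_iff _ (RingHom.injective _)]
    exact fst_ne_zero_of_herm_self_eq_zero (g.map_ne_zero_iff.mpr hT0) (by rw [hg, hTiso])
  · have hT1 := fst_ne_zero_of_herm_self_eq_zero hT0 hTiso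
    have hnorm := (herm_self_eq_zero_iff T).mp hTiso
    have hT2 : T.2 ≠ 0 := norm_ne_zero_iff.mp (hnorm ▸ norm_ne_zero_iff.mpr hT1)
    obtain ⟨u, hu, huT⟩ := exists_norm_eq_one_inner_eq hT2 (c := -T.1) (by rw [norm_neg, hnorm])
    obtain ⟨r, hr⟩ := ((Real.tendsto_exp_neg_atTop_nhds_zero.mul_const ‖T.1‖).eventually
      (gt_mem_nhds (by rwa [zero_mul]))).exists
    refine ⟨boostEquiv hu r, herm_boost hu r, ?_⟩
    rwa [herm_one_zero_left, boostEquiv_apply, boost_fst_of_inner_eq_neg r huT,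
      Complex.norm_conj, norm_mul, Complex.norm_real, Real.norm_of_nonneg (Real.exp_pos _).le]

/-- For `T ≠ 0` isotropic, `⟨u₂, T·h⟩` never vanishes as `h` ranges over the unitary
group of the form, but its absolute value has infimum `0`. Here `u₂ = (1,0)`. -/
theorem isotropic_pairing_inf_zero (W : Type*) [NormedAddCommGroup W]
    [InnerProductSpace ℂ W] [FiniteDimensional ℂ W]
    (T : ℂ × W) (hT0 : T ≠ 0) (hTiso : herm T T = 0) :
    (∀ g : (ℂ × W) ≃ₗ[ℂ] (ℂ × W), (∀ v w, herm (g v) (g w) = herm v w) →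
      herm ((1 : ℂ), (0 : W)) (g T) ≠ 0) ∧
    (∀ ε : ℝ, 0 < ε → ∃ g : (ℂ × W) ≃ₗ[ℂ] (ℂ × W),
      (∀ v w, herm (g v) (g w) = herm v w) ∧
        ‖herm ((1 : ℂ), (0 : W)) (g T)‖ < ε) :=
  isotropic_pairing_inf_zero_general W T hT0 hTiso
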